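/- arXiv:1210.7127 — 2 statements merged into one kernel-verified Lean document; each statement's English description precedes it below -/
import Mathlib

section
/- Let L_1, …, L_m ∈ M_N(ℂ) define a unital dissipator 𝓛_D (i.e. Σ_k L_k L_k† = Σ_k L_k† L_k). Let ρ_0, ρ_1 be density matrices with tr(ρ_1²) > tr(ρ_0²). Then ρ_1 is not reachable from ρ_0 by the controlled master equation: for every T ≥ 0, every continuous H : [0, T] → M_N(ℂ) with H(t) Hermitian for all t, and every differentiable Hermitian-valued solution ρ of ρ'(t) = −i[H(t), ρ(t)] + 𝓛_D(ρ(t)) with ρ(0) = ρ_0, one has ρ(t) ≠ ρ_1 for all t ∈ [0, T]. In particular, the controlled master equation with unital dissipator is never controllable on the set of density matrices. -/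
/-!
Along a solution, `d/dt tr ρ² = 2 Re tr (ρ ρ')`. The Hamiltonian part contributes
`tr (ρ [H, ρ]) = 0` by cyclicity of the trace. For Hermitian `ρ` the dissipator contributes
`2 tr (ρ 𝓛_D(ρ)) = tr ((Σ L_k L_k† - Σ L_k† L_k) ρ²) - Σ_k ‖[L_k, ρ]‖²`, and unitality kills the
first term. Hence purity is nonincreasing along every trajectory, whatever the control, and a
state of strictly larger purity is never reached.
-/

open Matrix
open scoped ComplexOrder

attribute [local instance] Matrix.frobeniusNormedAddCommGroup Matrix.frobeniusNormedSpace

noncomputable section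

/-- A density matrix: positive semidefinite (hence Hermitian) with unit trace. -/
def IsDensityMatrix {N : ℕ} (ρ : Matrix (Fin N) (Fin N) ℂ) : Prop :=
  ρ.PosSemidef ∧ ρ.trace = 1

/-- The dissipator associated to noise operators `L 1, …, L m`:
`𝓛_D(ρ) = Σ_k (L_k ρ L_k† − ½(L_k† L_k ρ + ρ L_k† L_k))`. -/
def dissipator {N m : ℕ} (L : Fin m → Matrix (Fin N) (Fin N) ℂ)
    (ρ : Matrix (Fin N) (Fin N) ℂ) : Matrix (Fin N) (Fin N) ℂ :=
  ∑ k : Fin m,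
    (L k * ρ * (L k)ᴴ - (1 / 2 : ℂ) • ((L k)ᴴ * L k * ρ + ρ * ((L k)ᴴ * L k)))

def purity {n : Type*} [Fintype n] (ρ : Matrix n n ℂ) : ℝ :=
  (trace (ρ * ρ)).re

section TraceIdentities

variable {n K : Type*} [Fintype n]

theorem trace_mul_commutator_self [CommRing K] (H ρ : Matrix n n K) :
    trace (ρ * (H * ρ - ρ * H)) = 0 := by
  rw [mul_sub, trace_sub, sub_eq_zero, ← mul_assoc, ← mul_assoc, trace_mul_cycle]

theorem two_mul_trace_mul_lindblad_term [Field K] [StarRing K] [CharZero K]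
    (A ρ : Matrix n n K) (hρ : ρ.IsHermitian) :
    2 * trace (ρ * (A * ρ * Aᴴ - (1 / 2 : K) • (Aᴴ * A * ρ + ρ * (Aᴴ * A)))) =
      trace ((A * Aᴴ - Aᴴ * A) * (ρ * ρ)) - trace ((A * ρ - ρ * A)ᴴ * (A * ρ - ρ * A)) := by
  simp only [conjTranspose_sub, conjTranspose_mul, hρ.eq, sub_mul, mul_sub, mul_add,
    Matrix.mul_smul, trace_sub, trace_add, trace_smul, smul_eq_mul, ← mul_assoc]
  have rot : ∀ X Y Z W : Matrix n n K, trace (X * Y * Z * W) = trace (Y * Z * W * X) :=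
    fun X Y Z W => by rw [mul_assoc, mul_assoc, trace_mul_comm]; simp only [mul_assoc]
  rw [rot ρ ρ Aᴴ A, rot ρ Aᴴ A ρ, rot ρ Aᴴ ρ A, rot Aᴴ ρ A ρ, rot ρ A ρ Aᴴ, rot Aᴴ ρ ρ A,
    rot ρ ρ A Aᴴ, rot ρ A Aᴴ ρ]
  ring

end TraceIdentities

theorem two_mul_trace_mul_dissipator {N m : ℕ} (L : Fin m → Matrix (Fin N) (Fin N) ℂ)
    (ρ : Matrix (Fin N) (Fin N) ℂ) (hρ : ρ.IsHermitian) :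
    2 * trace (ρ * dissipator L ρ) =
      trace ((∑ k, L k * (L k)ᴴ - ∑ k, (L k)ᴴ * L k) * (ρ * ρ)) -
        ∑ k, trace ((L k * ρ - ρ * L k)ᴴ * (L k * ρ - ρ * L k)) := by
  simp only [dissipator, Finset.mul_sum, trace_sum, ← Finset.sum_sub_distrib, Finset.sum_mul,
    two_mul_trace_mul_lindblad_term _ _ hρ]

theorem re_trace_mul_dissipator_nonpos {N m : ℕ} {L : Fin m → Matrix (Fin N) (Fin N) ℂ}
    (hunital : ∑ k, L k * (L k)ᴴ = ∑ k, (L k)ᴴ * L k)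
    {ρ : Matrix (Fin N) (Fin N) ℂ} (hρ : ρ.IsHermitian) :
    (trace (ρ * dissipator L ρ)).re ≤ 0 := by
  have hdiss := two_mul_trace_mul_dissipator L ρ hρ
  rw [hunital, sub_self, zero_mul, trace_zero, zero_sub] at hdiss
  have hsum : 0 ≤ ∑ k, trace ((L k * ρ - ρ * L k)ᴴ * (L k * ρ - ρ * L k)) :=
    Finset.sum_nonneg fun k _ => (posSemidef_conjTranspose_mul_self _).trace_nonneg
  have hnonpos : 2 * trace (ρ * dissipator L ρ) ≤ 0 := hdiss ▸ neg_nonpos.mpr hsum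
  have hre : 2 * (trace (ρ * dissipator L ρ)).re ≤ 0 := by
    simpa using (Complex.le_def.mp hnonpos).1
  linarith

section Derivative

attribute [local instance] Matrix.frobeniusNormedRing Matrix.frobeniusNormedAlgebra

theorem HasDerivWithinAt.purity {n : Type*} [Fintype n] [DecidableEq n]
    {ρ : ℝ → Matrix n n ℂ} {ρ' : Matrix n n ℂ} {s : Set ℝ} {t : ℝ}
    (h : HasDerivWithinAt ρ ρ' s t) :
    HasDerivWithinAt (fun u => purity (ρ u)) (2 * (trace (ρ t * ρ')).re) s t := by
  let reTrace : Matrix n n ℂ →L[ℝ] ℝ :=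
    Complex.reCLM.comp (LinearMap.toContinuousLinearMap ((traceLinearMap n ℂ ℂ).restrictScalars ℝ))
  refine (reTrace.hasFDerivAt.comp_hasDerivWithinAt t (h.mul h)).congr_deriv ?_
  change (trace (ρ' * ρ t + ρ t * ρ')).re = _
  rw [trace_add, trace_mul_comm ρ', Complex.add_re, two_mul]

end Derivative

theorem antitoneOn_purity_of_unital {N m : ℕ} {L : Fin m → Matrix (Fin N) (Fin N) ℂ}
    (hunital : ∑ k, L k * (L k)ᴴ = ∑ k, (L k)ᴴ * L k) {s : Set ℝ} (hs : Convex ℝ s)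
    {H ρ : ℝ → Matrix (Fin N) (Fin N) ℂ} (hherm : ∀ t ∈ s, (ρ t).IsHermitian)
    (hρ : ∀ t ∈ s, HasDerivWithinAt ρ
      (-Complex.I • (H t * ρ t - ρ t * H t) + dissipator L (ρ t)) s t) :
    AntitoneOn (fun t => purity (ρ t)) s := by
  have hpurity := fun t ht => (hρ t ht).purity
  refine antitoneOn_of_hasDerivWithinAt_nonpos hs (fun t ht => (hpurity t ht).continuousWithinAt)
    (fun t ht => (hpurity t (interior_subset ht)).mono interior_subset) fun t ht => ?_
  rw [mul_add, Matrix.mul_smul, trace_add, trace_smul, trace_mul_commutator_self, smul_zero,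
    zero_add]
  linarith [re_trace_mul_dissipator_nonpos hunital (hherm t (interior_subset ht))]

theorem not_reachable_of_purity_increase_general {N m : ℕ}
    (L : Fin m → Matrix (Fin N) (Fin N) ℂ)
    (hunital : ∑ k : Fin m, L k * (L k)ᴴ = ∑ k : Fin m, (L k)ᴴ * L k)
    (ρ0 ρ1 : Matrix (Fin N) (Fin N) ℂ)
    (hpurity : (Matrix.trace (ρ0 * ρ0)).re < (Matrix.trace (ρ1 * ρ1)).re) :
    ∀ (T : ℝ), 0 ≤ T →
      ∀ H : ℝ → Matrix (Fin N) (Fin N) ℂ,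
        ContinuousOn H (Set.Icc (0 : ℝ) T) →
        (∀ t ∈ Set.Icc (0 : ℝ) T, (H t).IsHermitian) →
        ∀ ρ : ℝ → Matrix (Fin N) (Fin N) ℂ,
          (∀ t ∈ Set.Icc (0 : ℝ) T, (ρ t).IsHermitian) →
          (∀ t ∈ Set.Icc (0 : ℝ) T,
            HasDerivWithinAt ρ
              (-Complex.I • (H t * ρ t - ρ t * H t) + dissipator L (ρ t))
              (Set.Icc (0 : ℝ) T) t) →
          ρ 0 = ρ0 →
          ∀ t ∈ Set.Icc (0 : ℝ) T, ρ t ≠ ρ1 := by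
  intro T hT H _ _ ρ hherm hρ hρ0 t ht hρ1
  have hdecay : purity (ρ t) ≤ purity (ρ 0) :=
    antitoneOn_purity_of_unital hunital (convex_Icc 0 T) hherm hρ (Set.left_mem_Icc.mpr hT) ht ht.1
  rw [hρ0, hρ1] at hdecay
  exact hpurity.not_ge hdecay

/-- With a unital dissipator, a density matrix `ρ1` of strictly larger purity than `ρ0`
is not reachable from `ρ0` by the controlled master equation, for any time horizon and
any continuous Hermitian-valued control Hamiltonian.  In particular the controlled
master equation with a unital dissipator is never controllable on density matrices. -/
theorem not_reachable_of_purity_increase {N m : ℕ}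
    (L : Fin m → Matrix (Fin N) (Fin N) ℂ)
    (hunital : ∑ k : Fin m, L k * (L k)ᴴ = ∑ k : Fin m, (L k)ᴴ * L k)
    (ρ0 ρ1 : Matrix (Fin N) (Fin N) ℂ)
    (hρ0 : IsDensityMatrix ρ0) (hρ1 : IsDensityMatrix ρ1)
    (hpurity : (Matrix.trace (ρ0 * ρ0)).re < (Matrix.trace (ρ1 * ρ1)).re) :
    ∀ (T : ℝ), 0 ≤ T →
      ∀ H : ℝ → Matrix (Fin N) (Fin N) ℂ,
        ContinuousOn H (Set.Icc (0 : ℝ) T) →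
        (∀ t ∈ Set.Icc (0 : ℝ) T, (H t).IsHermitian) →
        ∀ ρ : ℝ → Matrix (Fin N) (Fin N) ℂ,
          (∀ t ∈ Set.Icc (0 : ℝ) T, (ρ t).IsHermitian) →
          (∀ t ∈ Set.Icc (0 : ℝ) T,
            HasDerivWithinAt ρ
              (-Complex.I • (H t * ρ t - ρ t * H t) + dissipator L (ρ t))
              (Set.Icc (0 : ℝ) T) t) →
          ρ 0 = ρ0 →
          ∀ t ∈ Set.Icc (0 : ℝ) T, ρ t ≠ ρ1 :=
  not_reachable_of_purity_increase_general L hunital ρ0 ρ1 hpurity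
end
end

section
/- Let H0, H1, ρ_d ∈ M_N(ℂ) be Hermitian with [H0, ρ_d] = 0. Let u : ℝ → ℝ be continuous and let ρ : ℝ → M_N(ℂ) be differentiable with ρ(t) Hermitian for every t and ρ'(t) = −i[H0 + u(t)H1, ρ(t)]. Define the Lyapunov function V(t) = ½ tr((ρ_d − ρ(t))²). Then for every t, V'(t) = u(t) · Re tr([−iH1, ρ_d] · ρ(t)); in particular, under the feedback choice u(t) = −Re tr([−iH1, ρ_d] · ρ(t)) one has V'(t) = −(Re tr([−iH1, ρ_d] · ρ(t)))² ≤ 0. -/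
/-!
Write `B = H0 + u H1`, so that `ρ' = -i[B, ρ]` and `V' = Re tr(i[B, ρ](ρ_d - ρ))`.
By cyclicity of the trace `tr(ρ[B, ρ]) = 0` and `tr(ρ_d[B, ρ]) = tr([ρ_d, B]ρ)`, and
`[ρ_d, B] = u[ρ_d, H1]` because `H0` commutes with `ρ_d`.
-/

open Matrix

attribute [local instance] Matrix.frobeniusNormedAddCommGroup Matrix.frobeniusNormedSpace

noncomputable section

attribute [local instance] Matrix.frobeniusNormedRing Matrix.frobeniusNormedAlgebra

namespace Matrix

section Commutator

variable {n R : Type*} [Fintype n] [CommRing R]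

theorem trace_mul_commutator_self (X Y : Matrix n n R) : trace (X * (Y * X - X * Y)) = 0 := by
  rw [Matrix.mul_sub, trace_sub, trace_mul_cycle', sub_self]

theorem trace_mul_commutator (X Y Z : Matrix n n R) :
    trace (X * (Y * Z - Z * Y)) = trace ((X * Y - Y * X) * Z) := by
  rw [Matrix.mul_sub, Matrix.sub_mul, trace_sub, trace_sub, trace_mul_cycle' X Z Y,
    Matrix.mul_assoc, Matrix.mul_assoc]

theorem trace_sub_mul_commutator (D X B : Matrix n n R) :
    trace ((D - X) * (B * X - X * B)) = trace ((D * B - B * D) * X) := by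
  rw [Matrix.sub_mul, trace_sub, trace_mul_commutator_self, sub_zero, trace_mul_commutator]

theorem commutator_add_smul_of_commute {D H₀ H₁ : Matrix n n R} (h : H₀ * D = D * H₀) (c : R) :
    D * (H₀ + c • H₁) - (H₀ + c • H₁) * D = c • (D * H₁ - H₁ * D) := by
  rw [Matrix.mul_add, Matrix.add_mul, h, Matrix.mul_smul, Matrix.smul_mul, smul_sub]
  abel

end Commutator

theorem hasDerivAt_half_re_trace_mul_self {n : Type*} [Fintype n] [DecidableEq n]
    {f : ℝ → Matrix n n ℂ} {f' : Matrix n n ℂ} {t : ℝ} (hf : HasDerivAt f f' t) :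
    HasDerivAt (fun s => (1 / 2) * (trace (f s * f s)).re) (trace (f' * f t)).re t := by
  let reTrace : Matrix n n ℂ →L[ℝ] ℝ :=
    Complex.reCLM.comp
      (((traceLinearMap n ℂ ℂ).restrictScalars ℝ).toContinuousLinearMap)
  have h := ((reTrace.hasFDerivAt).comp_hasDerivAt t (hf.mul hf)).const_mul (1 / 2 : ℝ)
  refine h.congr_deriv ?_
  change (1 / 2) * (trace (f' * f t + f t * f')).re = _
  rw [trace_add, trace_mul_comm (f t) f', Complex.add_re]
  ring

end Matrix

theorem lyapunov_derivative_general {N : ℕ}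
    (H0 H1 ρd : Matrix (Fin N) (Fin N) ℂ)
    (hcomm : H0 * ρd = ρd * H0)
    (u : ℝ → ℝ)
    (ρ : ℝ → Matrix (Fin N) (Fin N) ℂ)
    (hderiv : ∀ t : ℝ, HasDerivAt ρ
      (-Complex.I • ((H0 + (u t : ℂ) • H1) * ρ t - ρ t * (H0 + (u t : ℂ) • H1))) t) :
    ∀ t : ℝ,
      HasDerivAt (fun s : ℝ => (1 / 2) * (Matrix.trace ((ρd - ρ s) * (ρd - ρ s))).re)
        (u t * (Matrix.trace ((-Complex.I • (H1 * ρd - ρd * H1)) * ρ t)).re) t ∧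
      (u t = -(Matrix.trace ((-Complex.I • (H1 * ρd - ρd * H1)) * ρ t)).re →
        HasDerivAt (fun s : ℝ => (1 / 2) * (Matrix.trace ((ρd - ρ s) * (ρd - ρ s))).re)
          (-((Matrix.trace ((-Complex.I • (H1 * ρd - ρd * H1)) * ρ t)).re) ^ 2) t ∧
        -((Matrix.trace ((-Complex.I • (H1 * ρd - ρd * H1)) * ρ t)).re) ^ 2 ≤ 0) := by
  intro t
  have hV := hasDerivAt_half_re_trace_mul_self ((hderiv t).const_sub ρd)
  have htrace : trace (-(-Complex.I • ((H0 + (u t : ℂ) • H1) * ρ t - ρ t * (H0 + (u t : ℂ) • H1)))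
        * (ρd - ρ t)) = u t * trace ((-Complex.I • (H1 * ρd - ρd * H1)) * ρ t) := by
    rw [neg_smul, neg_neg, smul_mul, trace_smul, trace_mul_comm, trace_sub_mul_commutator,
      commutator_add_smul_of_commute hcomm, smul_mul, trace_smul, smul_mul, trace_smul,
      ← neg_sub (ρd * H1), neg_mul, trace_neg, smul_eq_mul, smul_eq_mul, smul_eq_mul]
    ring
  rw [htrace, Complex.re_ofReal_mul] at hV
  refine ⟨hV, fun hfeedback => ⟨?_, neg_nonpos.2 (sq_nonneg _)⟩⟩
  rwa [hfeedback, neg_mul, ← sq] at hV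

/-- Lyapunov-based open-loop design for the controlled Liouville–von Neumann equation
`ρ' = −i[H0 + u(t)H1, ρ]`: with `V(t) = ½ tr((ρ_d − ρ(t))²)` and `[H0, ρ_d] = 0`, one has
`V'(t) = u(t) · Re tr([−iH1, ρ_d] ρ(t))`; in particular the feedback choice
`u(t) = −Re tr([−iH1, ρ_d] ρ(t))` gives `V'(t) = −(Re tr([−iH1, ρ_d] ρ(t)))² ≤ 0`. -/
theorem lyapunov_derivative {N : ℕ}
    (H0 H1 ρd : Matrix (Fin N) (Fin N) ℂ)
    (hH0 : H0.IsHermitian) (hH1 : H1.IsHermitian) (hρd : ρd.IsHermitian)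
    (hcomm : H0 * ρd = ρd * H0)
    (u : ℝ → ℝ) (hu : Continuous u)
    (ρ : ℝ → Matrix (Fin N) (Fin N) ℂ)
    (hρherm : ∀ t : ℝ, (ρ t).IsHermitian)
    (hderiv : ∀ t : ℝ, HasDerivAt ρ
      (-Complex.I • ((H0 + (u t : ℂ) • H1) * ρ t - ρ t * (H0 + (u t : ℂ) • H1))) t) :
    ∀ t : ℝ,
      HasDerivAt (fun s : ℝ => (1 / 2) * (Matrix.trace ((ρd - ρ s) * (ρd - ρ s))).re)
        (u t * (Matrix.trace ((-Complex.I • (H1 * ρd - ρd * H1)) * ρ t)).re) t ∧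
      (u t = -(Matrix.trace ((-Complex.I • (H1 * ρd - ρd * H1)) * ρ t)).re →
        HasDerivAt (fun s : ℝ => (1 / 2) * (Matrix.trace ((ρd - ρ s) * (ρd - ρ s))).re)
          (-((Matrix.trace ((-Complex.I • (H1 * ρd - ρd * H1)) * ρ t)).re) ^ 2) t ∧
        -((Matrix.trace ((-Complex.I • (H1 * ρd - ρd * H1)) * ρ t)).re) ^ 2 ≤ 0) :=
  lyapunov_derivative_general H0 H1 ρd hcomm u ρ hderiv
end
end
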